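/- Let γ ∈ (-n, ∞) and w(z) = |z|^γ on ℝⁿ. Then for all distinct x, y ∈ ℝⁿ, ∫_{B_{x,y}} |z|^γ dz is comparable (with constants depending only on n and γ) to (|x| + |y|)^γ |x-y|^n, where B_{x,y} is the ball of radius |x-y|/2 centered at (x+y)/2. -/

import Mathlib

/-!
When the ball `B(c, r)` stays away from the origin (`2r ≤ ‖c‖`), the weight `‖z‖^γ` is comparable
to `(‖c‖ + r)^γ` on it, so its integral is comparable to `(‖c‖ + r)^γ r^n`. In general the lower
bound comes from the sub-ball of radius `r/4` pushed away from the origin, and the upper bound near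
the origin from `B(c, r) ⊆ B(0, 3r)` and the scaling `∫_{B(0,R)} ‖z‖^γ = R^{n+γ} ∫_{B(0,1)} ‖z‖^γ`,
finite because `γ > -n`. Finally `B_{x,y} = B(m, |x-y|/2)` with `‖m‖ + |x-y|/2 ≍ ‖x‖ + ‖y‖`.
-/

open MeasureTheory Metric Set

noncomputable section

def ballXY {n : ℕ} (x y : EuclideanSpace ℝ (Fin n)) : Set (EuclideanSpace ℝ (Fin n)) :=
  ball (midpoint ℝ x y) (dist x y / 2)

open Module

lemma rpow_le_rpow_mul_of_le_mul {γ K u s : ℝ} (hu : 0 ≤ u) (hs : 0 < s)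
    (hus : u ≤ K * s) (hsu : s ≤ K * u) : u ^ γ ≤ K ^ |γ| * s ^ γ := by
  have hK : 0 < K := pos_of_mul_pos_left (hs.trans_le hsu) hu
  replace hu : 0 < u := pos_of_mul_pos_right (hs.trans_le hsu) hK.le
  rcases le_or_gt 0 γ with hγ | hγ
  · calc u ^ γ ≤ (K * s) ^ γ := Real.rpow_le_rpow hu.le hus hγ
      _ = K ^ |γ| * s ^ γ := by rw [abs_of_nonneg hγ, Real.mul_rpow hK.le hs.le]
  · calc u ^ γ ≤ (K⁻¹ * s) ^ γ :=
          Real.rpow_le_rpow_of_nonpos (by positivity) (by rwa [inv_mul_le_iff₀ hK]) hγ.le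
      _ = K ^ |γ| * s ^ γ := by
          rw [abs_of_neg hγ, Real.mul_rpow (by positivity) hs.le, Real.inv_rpow hK.le,
            Real.rpow_neg hK.le]

section NormedSpace

variable {E : Type*} [NormedAddCommGroup E] [NormedSpace ℝ E]

lemma norm_midpoint_add_half_dist_le (x y : E) :
    ‖midpoint ℝ x y‖ + dist x y / 2 ≤ ‖x‖ + ‖y‖ := by
  have hm : ‖midpoint ℝ x y‖ ≤ (‖x‖ + ‖y‖) / 2 := by
    rw [midpoint_eq_smul_add, invOf_eq_inv, norm_smul, norm_inv, Real.norm_two]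
    linarith [norm_add_le x y]
  linarith [norm_sub_le x y, dist_eq_norm x y]

lemma norm_add_norm_le_two_mul_norm_midpoint_add_half_dist (x y : E) :
    ‖x‖ + ‖y‖ ≤ 2 * (‖midpoint ℝ x y‖ + dist x y / 2) := by
  have hx := norm_le_norm_add_norm_sub' x (midpoint ℝ x y)
  have hy := norm_le_norm_add_norm_sub' y (midpoint ℝ x y)
  rw [← dist_eq_norm, dist_left_midpoint (𝕜 := ℝ), Real.norm_two] at hx
  rw [← dist_eq_norm, dist_right_midpoint (𝕜 := ℝ), Real.norm_two] at hy
  linarith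

lemma exists_dist_eq_norm_eq_norm_add [Nontrivial E] (c : E) {ρ : ℝ} (hρ : 0 ≤ ρ) :
    ∃ p : E, dist p c = ρ ∧ ‖p‖ = ‖c‖ + ρ := by
  obtain ⟨u, hu, hcu⟩ : ∃ u : E, ‖u‖ = 1 ∧ c = ‖c‖ • u := by
    rcases eq_or_ne c 0 with rfl | hc
    · obtain ⟨u, hu⟩ := exists_norm_eq E zero_le_one
      exact ⟨u, hu, by simp⟩
    · exact ⟨‖c‖⁻¹ • c, norm_smul_inv_norm hc, by rw [smul_inv_smul₀ (norm_ne_zero_iff.2 hc)]⟩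
  refine ⟨(‖c‖ + ρ) • u, ?_, ?_⟩
  · rw [dist_eq_norm]
    nth_rw 2 [hcu]
    rw [← sub_smul, add_sub_cancel_left, norm_smul, hu, mul_one, Real.norm_of_nonneg hρ]
  · rw [norm_smul, hu, mul_one, Real.norm_of_nonneg (by positivity)]

end NormedSpace

section Comparable

variable {E : Type*} [NormedAddCommGroup E] [MeasurableSpace E] {μ : Measure E} {γ s K : ℝ}
  {A : Set E}

lemma setIntegral_rpow_norm_le_of_comparable (hs : 0 < s) (hA : μ A ≠ ⊤)
    (hcomp : ∀ z ∈ A, ‖z‖ ≤ K * s ∧ s ≤ K * ‖z‖) :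
    ∫ z in A, ‖z‖ ^ γ ∂μ ≤ K ^ |γ| * s ^ γ * μ.real A := by
  refine (Real.le_norm_self _).trans (norm_setIntegral_le_of_norm_le_const hA.lt_top ?_)
  intro z hz
  rw [Real.norm_of_nonneg (by positivity)]
  exact rpow_le_rpow_mul_of_le_mul (norm_nonneg z) hs (hcomp z hz).1 (hcomp z hz).2

lemma le_setIntegral_rpow_norm_of_comparable (hs : 0 < s) (hAm : MeasurableSet A) (hA : μ A ≠ ⊤)
    (hint : IntegrableOn (fun z => ‖z‖ ^ γ) A μ) (hcomp : ∀ z ∈ A, ‖z‖ ≤ K * s ∧ s ≤ K * ‖z‖) :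
    (K ^ |γ|)⁻¹ * s ^ γ * μ.real A ≤ ∫ z in A, ‖z‖ ^ γ ∂μ := by
  refine setIntegral_ge_of_const_le_real hAm hA (fun z hz => ?_) hint
  obtain ⟨hzs, hsz⟩ := hcomp z hz
  have hK : 0 < K := pos_of_mul_pos_left (hs.trans_le hsz) (norm_nonneg z)
  have hz0 : 0 < ‖z‖ := pos_of_mul_pos_right (hs.trans_le hsz) hK.le
  rw [inv_mul_le_iff₀ (by positivity)]
  exact rpow_le_rpow_mul_of_le_mul hs.le hz0 hsz hzs

end Comparable

section AddHaar

variable {E : Type*} [NormedAddCommGroup E] [NormedSpace ℝ E] [FiniteDimensional ℝ E]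
  [MeasurableSpace E] [BorelSpace E] (μ : Measure E) [μ.IsAddHaarMeasure] {γ : ℝ}

lemma measureReal_ball_of_pos (c : E) {r : ℝ} (hr : 0 < r) :
    μ.real (ball c r) = r ^ finrank ℝ E * μ.real (ball 0 1) := by
  rw [measureReal_def, Measure.addHaar_ball_of_pos μ c hr, ENNReal.toReal_mul,
    ENNReal.toReal_ofReal (by positivity), measureReal_def]

lemma setIntegral_ball_zero_rpow_norm (γ : ℝ) {R : ℝ} (hR : 0 < R) :
    ∫ z in ball (0 : E) R, ‖z‖ ^ γ ∂μ =
      R ^ (finrank ℝ E + γ) * ∫ z in ball (0 : E) 1, ‖z‖ ^ γ ∂μ := by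
  have h := Measure.setIntegral_comp_smul_of_pos μ (fun z : E => ‖z‖ ^ γ) (ball 0 1) hR
  simp only [smul_unitBall_of_pos hR, norm_smul, Real.norm_of_nonneg hR.le,
    Real.mul_rpow hR.le (norm_nonneg _), integral_const_mul, smul_eq_mul] at h
  rw [Real.rpow_add hR, Real.rpow_natCast, mul_assoc, h, ← mul_assoc,
    mul_inv_cancel₀ (by positivity), one_mul]

lemma integrableOn_ball_rpow_norm [Nontrivial E] (hγ : -(finrank ℝ E : ℝ) < γ) (c : E) (r : ℝ) :
    IntegrableOn (fun z : E => ‖z‖ ^ γ) (ball c r) μ := by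
  have h : LocallyIntegrable (fun z : E => ‖z‖ ^ γ) μ :=
    locallyIntegrable_of_norm_le_rpow (C := 1) (α := -γ) finrank_pos (by linarith)
      (ae_of_all _ fun z => by rw [neg_neg, one_mul, Real.norm_of_nonneg (by positivity)])
      (Measurable.aestronglyMeasurable (by fun_prop))
  exact (h.integrableOn_isCompact (isCompact_closedBall c r)).mono_set ball_subset_closedBall

lemma le_setIntegral_ball_rpow_norm [Nontrivial E] (hγ : -(finrank ℝ E : ℝ) < γ) (c : E) {r : ℝ}
    (hr : 0 < r) :
    (4 ^ |γ|)⁻¹ * μ.real (ball (0 : E) 1) / 4 ^ finrank ℝ E * (‖c‖ + r) ^ γ * r ^ finrank ℝ E ≤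
      ∫ z in ball c r, ‖z‖ ^ γ ∂μ := by
  obtain ⟨p, hpc, hp⟩ := exists_dist_eq_norm_eq_norm_add c (half_pos hr).le
  have hcomp : ∀ z ∈ ball p (r / 4), ‖z‖ ≤ 4 * (‖c‖ + r) ∧ ‖c‖ + r ≤ 4 * ‖z‖ := by
    intro z hz
    rw [mem_ball, dist_eq_norm] at hz
    have := abs_le.1 ((abs_norm_sub_norm_le z p).trans hz.le)
    constructor <;> linarith [norm_nonneg c]
  calc (4 ^ |γ|)⁻¹ * μ.real (ball (0 : E) 1) / 4 ^ finrank ℝ E * (‖c‖ + r) ^ γ * r ^ finrank ℝ E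
      = (4 ^ |γ|)⁻¹ * (‖c‖ + r) ^ γ * μ.real (ball p (r / 4)) := by
        rw [measureReal_ball_of_pos μ p (by positivity), div_pow]; ring
    _ ≤ ∫ z in ball p (r / 4), ‖z‖ ^ γ ∂μ :=
        le_setIntegral_rpow_norm_of_comparable (by positivity) measurableSet_ball
          measure_ball_lt_top.ne (integrableOn_ball_rpow_norm μ hγ p _) hcomp
    _ ≤ ∫ z in ball c r, ‖z‖ ^ γ ∂μ :=
        setIntegral_mono_set (integrableOn_ball_rpow_norm μ hγ c r)
          (ae_of_all _ fun z => by positivity) (ball_subset_ball' (by linarith)).eventuallyLE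

lemma setIntegral_ball_rpow_norm_le [Nontrivial E] (hγ : -(finrank ℝ E : ℝ) < γ) (c : E) {r : ℝ}
    (hr : 0 < r) :
    ∫ z in ball c r, ‖z‖ ^ γ ∂μ ≤
      3 ^ |γ| * (μ.real (ball (0 : E) 1) + 3 ^ finrank ℝ E * ∫ z in ball (0 : E) 1, ‖z‖ ^ γ ∂μ) *
        (‖c‖ + r) ^ γ * r ^ finrank ℝ E := by
  set d := finrank ℝ E
  set V := μ.real (ball (0 : E) 1)
  set I := ∫ z in ball (0 : E) 1, ‖z‖ ^ γ ∂μ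
  set s := ‖c‖ + r
  have hs : 0 < s := by positivity
  have hI : 0 ≤ I := setIntegral_nonneg measurableSet_ball fun z _ => by positivity
  rcases le_or_gt (2 * r) ‖c‖ with hfar | hnear
  · have hcomp : ∀ z ∈ ball c r, ‖z‖ ≤ 3 * s ∧ s ≤ 3 * ‖z‖ := by
      intro z hz
      rw [mem_ball, dist_eq_norm] at hz
      have := abs_le.1 ((abs_norm_sub_norm_le z c).trans hz.le)
      constructor <;> linarith
    calc ∫ z in ball c r, ‖z‖ ^ γ ∂μ ≤ 3 ^ |γ| * s ^ γ * μ.real (ball c r) :=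
          setIntegral_rpow_norm_le_of_comparable hs measure_ball_lt_top.ne hcomp
      _ = 3 ^ |γ| * V * s ^ γ * r ^ d := by rw [measureReal_ball_of_pos μ c hr]; ring
      _ ≤ 3 ^ |γ| * (V + 3 ^ d * I) * s ^ γ * r ^ d := by
          gcongr
          exact le_add_of_nonneg_right (mul_nonneg (by positivity) hI)
  · have h3r : 3 * r ≤ 3 * s ∧ s ≤ 3 * (3 * r) := by constructor <;> linarith [norm_nonneg c]
    calc ∫ z in ball c r, ‖z‖ ^ γ ∂μ ≤ ∫ z in ball 0 (3 * r), ‖z‖ ^ γ ∂μ :=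
          setIntegral_mono_set (integrableOn_ball_rpow_norm μ hγ 0 _)
            (ae_of_all _ fun z => by positivity)
            (ball_subset_ball' (by rw [dist_zero_right]; linarith)).eventuallyLE
      _ = 3 ^ d * (3 * r) ^ γ * I * r ^ d := by
          rw [setIntegral_ball_zero_rpow_norm μ γ (by positivity), Real.rpow_add (by positivity),
            Real.rpow_natCast, mul_pow]; ring
      _ ≤ 3 ^ d * (3 ^ |γ| * s ^ γ) * I * r ^ d := by
          gcongr; exact rpow_le_rpow_mul_of_le_mul (by positivity) hs h3r.1 h3r.2
      _ ≤ 3 ^ |γ| * V * s ^ γ * r ^ d + 3 ^ d * (3 ^ |γ| * s ^ γ) * I * r ^ d :=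
          le_add_of_nonneg_left (by positivity)
      _ = 3 ^ |γ| * (V + 3 ^ d * I) * s ^ γ * r ^ d := by ring

lemma exists_bounds_setIntegral_ball_rpow_norm [Nontrivial E] (hγ : -(finrank ℝ E : ℝ) < γ) :
    ∃ a > 0, ∃ A > 0, ∀ (c : E) (r : ℝ), 0 < r →
      a * (‖c‖ + r) ^ γ * r ^ finrank ℝ E ≤ ∫ z in ball c r, ‖z‖ ^ γ ∂μ ∧
      ∫ z in ball c r, ‖z‖ ^ γ ∂μ ≤ A * (‖c‖ + r) ^ γ * r ^ finrank ℝ E := by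
  have hV : 0 < μ.real (ball (0 : E) 1) :=
    ENNReal.toReal_pos (measure_ball_pos μ 0 one_pos).ne' measure_ball_lt_top.ne
  have hI : 0 ≤ ∫ z in ball (0 : E) 1, ‖z‖ ^ γ ∂μ :=
    setIntegral_nonneg measurableSet_ball fun z _ => by positivity
  exact ⟨_, by positivity, _, by positivity, fun c r hr =>
    ⟨le_setIntegral_ball_rpow_norm μ hγ c hr, setIntegral_ball_rpow_norm_le μ hγ c hr⟩⟩

end AddHaar

/-- for `γ > -n` and the weight `w(z) = |z|^γ`, for all distinct `x, y`,
`∫_{B_{x,y}} |z|^γ dz ≍ (|x|+|y|)^γ |x-y|^n` with constants depending only on `n, γ`. -/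
theorem statement6 {n : ℕ} (γ : ℝ) (hγ : -(n : ℝ) < γ) :
    ∃ c > 0, ∃ C > 0, ∀ x y : EuclideanSpace ℝ (Fin n), x ≠ y →
      c * (‖x‖ + ‖y‖) ^ γ * dist x y ^ (n : ℝ) ≤ (∫ z in ballXY x y, ‖z‖ ^ γ) ∧
      (∫ z in ballXY x y, ‖z‖ ^ γ) ≤ C * (‖x‖ + ‖y‖) ^ γ * dist x y ^ (n : ℝ) := by
  rcases subsingleton_or_nontrivial (EuclideanSpace ℝ (Fin n)) with hE | hE
  · exact ⟨1, one_pos, 1, one_pos, fun x y hxy => (hxy (Subsingleton.elim x y)).elim⟩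
  obtain ⟨a, ha, A, hA, hball⟩ := exists_bounds_setIntegral_ball_rpow_norm
    (volume : Measure (EuclideanSpace ℝ (Fin n))) (by rwa [finrank_euclideanSpace_fin])
  refine ⟨a / 2 ^ |γ| / 2 ^ n, by positivity, A * 2 ^ |γ| / 2 ^ n, by positivity,
    fun x y hxy => ?_⟩
  set r := dist x y / 2
  set s := ‖midpoint ℝ x y‖ + r
  set S := ‖x‖ + ‖y‖
  have hr : 0 < r := half_pos (dist_pos.2 hxy)
  have hsS : s ≤ S := norm_midpoint_add_half_dist_le x y
  have hSs : S ≤ 2 * s := norm_add_norm_le_two_mul_norm_midpoint_add_half_dist x y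
  have hs : 0 < s := by positivity
  have hSγ : S ^ γ ≤ 2 ^ |γ| * s ^ γ :=
    rpow_le_rpow_mul_of_le_mul (by positivity) hs hSs (by linarith)
  have hsγ : s ^ γ ≤ 2 ^ |γ| * S ^ γ :=
    rpow_le_rpow_mul_of_le_mul hs.le (hs.trans_le hsS) (by linarith) (by linarith)
  have hdist : dist x y ^ (n : ℝ) = 2 ^ n * r ^ n := by
    rw [Real.rpow_natCast, div_pow, mul_div_cancel₀ _ (by positivity)]
  obtain ⟨hlow, hup⟩ := hball (midpoint ℝ x y) r hr
  rw [finrank_euclideanSpace_fin] at hlow hup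
  rw [ballXY, hdist]
  constructor
  · calc a / 2 ^ |γ| / 2 ^ n * S ^ γ * (2 ^ n * r ^ n) = a * (S ^ γ / 2 ^ |γ|) * r ^ n := by
          field_simp
      _ ≤ a * s ^ γ * r ^ n := by gcongr; rwa [div_le_iff₀' (by positivity)]
      _ ≤ _ := hlow
  · calc _ ≤ A * s ^ γ * r ^ n := hup
      _ ≤ A * (2 ^ |γ| * S ^ γ) * r ^ n := by gcongr
      _ = A * 2 ^ |γ| / 2 ^ n * S ^ γ * (2 ^ n * r ^ n) := by field_simp
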